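/- arXiv:0802.0261 — 2 statements merged into one kernel-verified Lean document; each statement's English description precedes it below -/
import Mathlib

section
/- For every ρ > 0 and every real x ≥ 0 with x ≠ sinh ρ, setting u = U_ρ(x) = (x·sinh ρ + 1)/(−x + sinh ρ), one has u ≠ x, and the geodesic γ(x, u) with ideal endpoints x and u is tangent to the hyperbolic disc B_ρ(i); that is, inf_{z ∈ γ(x,u)} dist(z, i) = ρ. -/
open UpperHalfPlane MeasureTheory

/-- The complete hyperbolic geodesic of the upper half-plane with ideal endpoints `a` and `b`:
the Euclidean semicircle `{z ∈ ℍ : |z − (a+b)/2| = |a−b|/2}`. -/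
noncomputable def geodesic (a b : ℝ) : Set ℍ :=
  {z : ℍ | ‖(z : ℂ) - (((a + b) / 2 : ℝ) : ℂ)‖ = |a - b| / 2}

/-- The geodesic `γ(a,b)` is tangent to the hyperbolic disc `B_ρ(i)`:
the infimum of the hyperbolic distance from points of the geodesic to `i` equals `ρ`. -/
def TangentToDisc (a b ρ : ℝ) : Prop :=
  sInf ((fun z : ℍ => dist z UpperHalfPlane.I) '' geodesic a b) = ρ

/-- The geodesic `γ(a,b)` intersects the closed hyperbolic disc `B̄_r(i)`. -/
def MeetsClosedDisc (a b r : ℝ) : Prop :=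
  ∃ z ∈ geodesic a b, dist z UpperHalfPlane.I ≤ r

/-!
Writing `z = X + iy`, one has `cosh dist(z, i) = (X² + y² + 1) / (2y)`, and `z` lies on `γ(a, b)`
iff `(X - a)(X - b) + y² = 0`. On that circle `(a - b)² ((X² + y² + 1)² - (2Ky)²)` is a perfect
square in `X` as soon as `K² (a - b)² = (a² + 1)(b² + 1)`, so `cosh dist(z, i) ≥ K`, with equality
at the foot of the perpendicular. Hence the distance from `i` to `γ(a, b)` is
`arsinh (|ab + 1| / |a - b|)`, and for `u = U_ρ(x)` one has `xu + 1 = -sinh ρ · (x - u)`.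
-/

open Real

lemma mem_geodesic_iff {a b : ℝ} {z : ℍ} :
    z ∈ geodesic a b ↔ (z.re - a) * (z.re - b) + z.im ^ 2 = 0 := by
  have hnorm : ‖(z : ℂ) - (((a + b) / 2 : ℝ) : ℂ)‖ ^ 2 = (z.re - (a + b) / 2) ^ 2 + z.im ^ 2 := by
    rw [Complex.sq_norm, Complex.normSq_apply]
    simp only [Complex.sub_re, Complex.sub_im, Complex.ofReal_re, Complex.ofReal_im, sub_zero,
      coe_re, coe_im]
    ring
  rw [geodesic, Set.mem_ofPred_eq, ← sq_eq_sq₀ (norm_nonneg _) (by positivity), hnorm, div_pow,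
    sq_abs]
  constructor <;> intro h <;> linear_combination h

lemma cosh_dist_I (z : ℍ) : cosh (dist z I) = (z.re ^ 2 + z.im ^ 2 + 1) / (2 * z.im) := by
  simp [cosh_dist']

lemma sub_ne_zero_of_sq_mul_sub_sq_eq {a b K : ℝ}
    (hK : K ^ 2 * (a - b) ^ 2 = (a ^ 2 + 1) * (b ^ 2 + 1)) : a - b ≠ 0 := by
  intro h
  rw [h] at hK
  nlinarith [sq_nonneg a, sq_nonneg b, sq_nonneg (a * b)]

lemma le_cosh_dist_I_of_mem_geodesic {a b K : ℝ}
    (hK : K ^ 2 * (a - b) ^ 2 = (a ^ 2 + 1) * (b ^ 2 + 1)) {z : ℍ} (hz : z ∈ geodesic a b) :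
    K ≤ cosh (dist z I) := by
  rw [mem_geodesic_iff] at hz
  have hy := z.im_pos
  have hab : 0 < (a - b) ^ 2 := sq_pos_iff.2 (sub_ne_zero_of_sq_mul_sub_sq_eq hK)
  have hsq : (a - b) ^ 2 * ((z.re ^ 2 + z.im ^ 2 + 1) ^ 2 - (2 * K * z.im) ^ 2)
      = ((a ^ 2 + b ^ 2 + 2) * z.re - (a + b) * (a * b + 1)) ^ 2 := by
    linear_combination (-4 * z.im ^ 2) * hK + ((a - b) ^ 2 * (z.re ^ 2 + z.im ^ 2 + 1
      + (a + b) * z.re + 1 - a * b) - 4 * (a ^ 2 + 1) * (b ^ 2 + 1)) * hz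
  have hL : (2 * K * z.im) ^ 2 ≤ (z.re ^ 2 + z.im ^ 2 + 1) ^ 2 :=
    sub_nonneg.1 ((mul_nonneg_iff_of_pos_left hab).1 (hsq ▸ sq_nonneg _))
  rw [cosh_dist_I, le_div_iff₀ (by positivity)]
  linarith [(abs_le_of_sq_le_sq' hL (by positivity)).2]

lemma exists_mem_geodesic_cosh_dist_I_eq {a b K : ℝ} (hK0 : 0 < K)
    (hK : K ^ 2 * (a - b) ^ 2 = (a ^ 2 + 1) * (b ^ 2 + 1)) :
    ∃ z ∈ geodesic a b, cosh (dist z I) = K := by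
  have hD : 0 < a ^ 2 + b ^ 2 + 2 := by positivity
  have hab := sub_ne_zero_of_sq_mul_sub_sq_eq hK
  -- the foot of the perpendicular from `i` to `γ(a, b)`
  refine ⟨⟨⟨(a + b) * (a * b + 1) / (a ^ 2 + b ^ 2 + 2), K * (a - b) ^ 2 / (a ^ 2 + b ^ 2 + 2)⟩,
    div_pos (mul_pos hK0 (sq_pos_iff.2 hab)) hD⟩, ?_, ?_⟩
  · rw [mem_geodesic_iff]
    simp only [mk_re, mk_im]
    field_simp
    linear_combination (a - b) ^ 2 * hK
  · rw [cosh_dist_I]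
    simp only [mk_re, mk_im]
    field_simp
    linear_combination ((a - b) ^ 2 - 2 * (a ^ 2 + b ^ 2 + 2)) * hK

theorem sInf_dist_I_geodesic {a b : ℝ} (hab : a ≠ b) :
    sInf ((fun z : ℍ => dist z I) '' geodesic a b) = arsinh (|a * b + 1| / |a - b|) := by
  set δ := arsinh (|a * b + 1| / |a - b|)
  have hδ : 0 ≤ δ := arsinh_nonneg_iff.2 (by positivity)
  have hK : cosh δ ^ 2 * (a - b) ^ 2 = (a ^ 2 + 1) * (b ^ 2 + 1) := by
    have hab' : |a - b| ≠ 0 := abs_ne_zero.2 (sub_ne_zero.2 hab)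
    rw [cosh_sq', sinh_arsinh, div_pow, sq_abs, sq_abs]
    field_simp
    ring
  refine IsLeast.csInf_eq ⟨?_, ?_⟩
  · obtain ⟨z, hz, hzδ⟩ := exists_mem_geodesic_cosh_dist_I_eq (cosh_pos δ) hK
    exact ⟨z, hz, cosh_injOn dist_nonneg hδ hzδ⟩
  · rintro _ ⟨z, hz, rfl⟩
    have := le_cosh_dist_I_of_mem_geodesic hK hz
    rwa [cosh_le_cosh, abs_of_nonneg hδ, abs_of_nonneg dist_nonneg] at this

theorem tangent_U_general (ρ : ℝ) (hρ : 0 < ρ) (x : ℝ) (hxρ : x ≠ Real.sinh ρ) :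
    (x * Real.sinh ρ + 1) / (-x + Real.sinh ρ) ≠ x ∧
      TangentToDisc x ((x * Real.sinh ρ + 1) / (-x + Real.sinh ρ)) ρ := by
  set s := sinh ρ
  set u := (x * s + 1) / (-x + s)
  have hd : -x + s ≠ 0 := by rw [neg_add_eq_sub, sub_ne_zero]; exact hxρ.symm
  have hxu : (x - u) * (-x + s) = -(x ^ 2 + 1) := by
    simp only [u]
    field_simp
    ring
  have hxu0 : x - u ≠ 0 := left_ne_zero_of_mul (hxu ▸ (neg_ne_zero.2 (by positivity)))
  have hprod : x * u + 1 = -s * (x - u) := by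
    simp only [u]
    field_simp
    ring
  refine ⟨fun h => hxu0 (sub_eq_zero.2 h.symm), ?_⟩
  rw [TangentToDisc, sInf_dist_I_geodesic (sub_ne_zero.1 hxu0), hprod, abs_mul,
    mul_div_cancel_right₀ _ (abs_ne_zero.2 hxu0), abs_neg, abs_of_pos (sinh_pos_iff.2 hρ),
    arsinh_sinh]

/-- For every ρ > 0 and every real x ≥ 0 with x ≠ sinh ρ, setting
u = U_ρ(x) = (x·sinh ρ + 1)/(−x + sinh ρ), one has u ≠ x, and the geodesic γ(x, u)
is tangent to the hyperbolic disc B_ρ(i). -/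
theorem tangent_U (ρ : ℝ) (hρ : 0 < ρ) (x : ℝ) (hx : 0 ≤ x) (hxρ : x ≠ Real.sinh ρ) :
    (x * Real.sinh ρ + 1) / (-x + Real.sinh ρ) ≠ x ∧
      TangentToDisc x ((x * Real.sinh ρ + 1) / (-x + Real.sinh ρ)) ρ :=
  tangent_U_general ρ hρ x hxρ
end

section
/- For every ρ > 0, every real x ≥ 0 with x ≠ sinh ρ, and every real y with y ≠ x, the geodesic γ(x,y) with ideal endpoints x and y is tangent to the hyperbolic disc B_ρ(i) (i.e. inf_{z ∈ γ(x,y)} dist(z, i) = ρ) if and only if y = W_ρ(x) or y = U_ρ(x). -/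
open UpperHalfPlane MeasureTheory

/-! The distance `d` from `i` to `γ(a, b)` satisfies `|a - b| cosh d = √((a² + 1)(b² + 1))`:
on the geodesic, `(a - b)² (u² + v² + 1)² - 4 v² (a² + 1)(b² + 1)` is a perfect square in
`u = Re z`, vanishing at the foot of the perpendicular from `i`. Since
`(a² + 1)(b² + 1) = (ab + 1)² + (a - b)²` and `cosh² ρ = 1 + sinh² ρ`, tangency at radius `ρ`
reads `(ab + 1)² = sinh² ρ (a - b)²`, which factors into the two linear equations
`y = W_ρ(x)` and `y = U_ρ(x)`. -/

open Real

namespace UpperHalfPlane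

theorem mem_geodesic_iff {a b : ℝ} {z : ℍ} :
    z ∈ geodesic a b ↔ (z.re - a) * (z.re - b) + z.im ^ 2 = 0 := by
  have hnorm : ‖(z : ℂ) - (((a + b) / 2 : ℝ) : ℂ)‖ ^ 2 = (z.re - (a + b) / 2) ^ 2 + z.im ^ 2 := by
    rw [Complex.sq_norm, Complex.normSq_apply]
    simp only [Complex.sub_re, Complex.sub_im, coe_re, coe_im, Complex.ofReal_re,
      Complex.ofReal_im, sub_zero]
    ring
  rw [geodesic, Set.mem_ofPred_eq, ← sq_eq_sq₀ (norm_nonneg _) (by positivity), hnorm, div_pow,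
    sq_abs]
  constructor <;> intro h <;> linear_combination h

theorem cosh_dist_I (z : ℍ) : cosh (dist z I) = (z.re ^ 2 + z.im ^ 2 + 1) / (2 * z.im) := by
  rw [cosh_dist', I_re, I_im]
  ring_nf

theorem sqrt_le_abs_sub_mul_cosh_dist_I {a b : ℝ} {z : ℍ} (hz : z ∈ geodesic a b) :
    √((a ^ 2 + 1) * (b ^ 2 + 1)) ≤ |a - b| * cosh (dist z I) := by
  rw [mem_geodesic_iff] at hz
  have hsquare : (|a - b| * (z.re ^ 2 + z.im ^ 2 + 1)) ^ 2
      - (2 * z.im * √((a ^ 2 + 1) * (b ^ 2 + 1))) ^ 2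
      = ((a ^ 2 + b ^ 2 + 2) * z.re - (a + b) * (1 + a * b)) ^ 2 := by
    rw [mul_pow, mul_pow, sq_sqrt (by positivity), mul_pow, sq_abs]
    linear_combination ((a - b) ^ 2 * (z.re ^ 2 + z.im ^ 2 + 1 + (a + b) * z.re + 1 - a * b)
      - 4 * (a ^ 2 + 1) * (b ^ 2 + 1)) * hz
  have hle : 2 * z.im * √((a ^ 2 + 1) * (b ^ 2 + 1)) ≤ |a - b| * (z.re ^ 2 + z.im ^ 2 + 1) :=
    (sq_le_sq₀ (by positivity) (by positivity)).1 (sub_nonneg.1 (hsquare ▸ sq_nonneg _))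
  rw [cosh_dist_I, mul_div_assoc', le_div_iff₀ (by positivity)]
  linarith

theorem exists_mem_geodesic_abs_sub_mul_cosh_dist_I_eq {a b : ℝ} (hab : a ≠ b) :
    ∃ z ∈ geodesic a b, |a - b| * cosh (dist z I) = √((a ^ 2 + 1) * (b ^ 2 + 1)) := by
  set E := (a ^ 2 + 1) * (b ^ 2 + 1)
  set N := a ^ 2 + b ^ 2 + 2
  have hd : 0 < |a - b| := abs_pos.2 (sub_ne_zero.2 hab)
  have hE : 0 < E := by positivity
  have hS : √E ^ 2 = E := sq_sqrt hE.le
  have hN : 0 < N := by positivity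
  -- the foot of the perpendicular from `I` to the geodesic
  let z : ℍ := ⟨⟨(a + b) * (1 + a * b) / N, |a - b| * √E / N⟩, by positivity⟩
  have hre : z.re = (a + b) * (1 + a * b) / N := rfl
  have him : z.im = |a - b| * √E / N := rfl
  have hnormSq : z.re ^ 2 + z.im ^ 2 + 1 = 2 * E / N := by
    rw [hre, him]
    field_simp
    rw [hS, sq_abs]
    ring
  refine ⟨z, ?_, ?_⟩
  · rw [mem_geodesic_iff, hre, him]
    field_simp
    rw [hS, sq_abs]
    ring
  · rw [cosh_dist_I, hnormSq, him]
    field_simp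
    linear_combination -hS

theorem abs_sub_mul_cosh_sInf_dist_I_geodesic {a b : ℝ} (hab : a ≠ b) :
    |a - b| * cosh (sInf ((fun z : ℍ => dist z I) '' geodesic a b)) =
      √((a ^ 2 + 1) * (b ^ 2 + 1)) := by
  obtain ⟨z₀, hz₀, hcosh⟩ := exists_mem_geodesic_abs_sub_mul_cosh_dist_I_eq hab
  have hd : 0 < |a - b| := abs_pos.2 (sub_ne_zero.2 hab)
  have hleast : IsLeast ((fun z : ℍ => dist z I) '' geodesic a b) (dist z₀ I) := by
    refine ⟨⟨z₀, hz₀, rfl⟩, ?_⟩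
    rintro _ ⟨z, hz, rfl⟩
    have h := hcosh.trans_le (sqrt_le_abs_sub_mul_cosh_dist_I hz)
    rwa [mul_le_mul_iff_right₀ hd, cosh_le_cosh, abs_of_nonneg dist_nonneg,
      abs_of_nonneg dist_nonneg] at h
  rw [hleast.csInf_eq, hcosh]

end UpperHalfPlane

theorem tangentToDisc_iff {a b ρ : ℝ} (hab : a ≠ b) (hρ : 0 ≤ ρ) :
    TangentToDisc a b ρ ↔ (a * b + 1) ^ 2 = sinh ρ ^ 2 * (a - b) ^ 2 := by
  have hd : 0 < |a - b| := abs_pos.2 (sub_ne_zero.2 hab)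
  have hinf : 0 ≤ sInf ((fun z : ℍ => dist z I) '' geodesic a b) :=
    Real.sInf_nonneg (by rintro _ ⟨z, -, rfl⟩; exact dist_nonneg)
  rw [TangentToDisc, ← cosh_injOn.eq_iff hinf hρ, ← mul_right_inj' hd.ne',
    abs_sub_mul_cosh_sInf_dist_I_geodesic hab,
    sqrt_eq_iff_eq_sq (by positivity) (by positivity), mul_pow, sq_abs, cosh_sq']
  constructor <;> intro h <;> linear_combination h

theorem mul_add_one_sq_eq_iff {x y s : ℝ} (hxs : x + s ≠ 0) (hxs' : x ≠ s) :
    (x * y + 1) ^ 2 = s ^ 2 * (x - y) ^ 2 ↔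
      y = (x * s - 1) / (x + s) ∨ y = (x * s + 1) / (-x + s) := by
  have hsx : -x + s ≠ 0 := by rw [neg_add_eq_sub]; exact sub_ne_zero.2 hxs'.symm
  rw [eq_div_iff hxs, eq_div_iff hsx, ← sub_eq_zero, ← sub_eq_zero (a := y * (x + s)),
    ← sub_eq_zero (a := y * (-x + s)), ← mul_eq_zero]
  constructor <;> intro h <;> linear_combination -h

/-- For every ρ > 0, every real x ≥ 0 with x ≠ sinh ρ, and every real y ≠ x, the geodesic
γ(x,y) is tangent to B_ρ(i) iff y = W_ρ(x) or y = U_ρ(x). -/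
theorem tangent_iff (ρ : ℝ) (hρ : 0 < ρ) (x : ℝ) (hx : 0 ≤ x) (hxρ : x ≠ Real.sinh ρ)
    (y : ℝ) (hy : y ≠ x) :
    TangentToDisc x y ρ ↔
      y = (x * Real.sinh ρ - 1) / (x + Real.sinh ρ) ∨
        y = (x * Real.sinh ρ + 1) / (-x + Real.sinh ρ) := by
  have hxs : x + sinh ρ ≠ 0 := (add_pos_of_nonneg_of_pos hx (sinh_pos_iff.2 hρ)).ne'
  rw [tangentToDisc_iff hy.symm hρ.le, mul_add_one_sq_eq_iff hxs hxρ]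
end
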